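/- arXiv:1410.1806 — 2 statements merged into one kernel-verified Lean document; each statement's English description precedes it below -/
import Mathlib

section
/- Let Δ < 0 be a discriminant and (a,b,c) ∈ T_Δ. Then the point τ(a,b,c) = (b + √Δ)/(2a) belongs to the standard fundamental domain 𝔇. -/
/-!
`τ = τ(a,b,c)` is the root in `ℍ` of `aX² - bX + c`, so `2a · Re τ = b` and `a · |τ|² = c`.
Under these two identities the inequalities defining a reduced triple become exactly the
inequalities `|Re τ| ≤ 1/2`, `|τ| ≥ 1` cutting out `𝔇`, boundary cases included.
-/

open Complex Polynomial

/-- The Eisenstein lattice sum `g₂(z) = 60 Σ' 1/(mz+n)⁴`. -/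
noncomputable def g2 (z : ℂ) : ℂ :=
  60 * ∑' p : {p : ℤ × ℤ // p ≠ 0}, 1 / (((p : ℤ × ℤ).1 : ℂ) * z + ((p : ℤ × ℤ).2 : ℂ)) ^ 4

/-- The Eisenstein lattice sum `g₃(z) = 140 Σ' 1/(mz+n)⁶`. -/
noncomputable def g3 (z : ℂ) : ℂ :=
  140 * ∑' p : {p : ℤ × ℤ // p ≠ 0}, 1 / (((p : ℤ × ℤ).1 : ℂ) * z + ((p : ℤ × ℤ).2 : ℂ)) ^ 6

/-- Klein's modular `j`-invariant, `j = 1728 g₂³ / (g₂³ - 27 g₃²)`. -/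
noncomputable def jInv (z : ℂ) : ℂ :=
  1728 * g2 z ^ 3 / (g2 z ^ 3 - 27 * g3 z ^ 2)

/-- `τ` is an imaginary quadratic point of the upper half-plane. -/
def IsImagQuad (τ : ℂ) : Prop :=
  0 < τ.im ∧ ∃ a b c : ℤ, a ≠ 0 ∧ (a : ℂ) * τ ^ 2 + (b : ℂ) * τ + (c : ℂ) = 0

/-- `Δ` is the discriminant of the CM order `End⟨τ,1⟩`: equivalently (and this is the standard
characterization), `Δ = b² - 4ac` where `aτ² + bτ + c = 0` with `a > 0`, `gcd(a,b,c) = 1`. -/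
def IsDiscOf (Δ : ℤ) (τ : ℂ) : Prop :=
  ∃ a b c : ℤ, 0 < a ∧ Int.gcd a (Int.gcd b c) = 1 ∧
    (a : ℂ) * τ ^ 2 + (b : ℂ) * τ + (c : ℂ) = 0 ∧ Δ = b ^ 2 - 4 * a * c

/-- The set `T_Δ` of reduced primitive integral triples of discriminant `Δ`. -/
def Tset (Δ : ℤ) : Set (ℤ × ℤ × ℤ) :=
  {t | Int.gcd t.1 (Int.gcd t.2.1 t.2.2) = 1 ∧ t.2.1 ^ 2 - 4 * t.1 * t.2.2 = Δ ∧
    ((-t.1 < t.2.1 ∧ t.2.1 ≤ t.1 ∧ t.1 < t.2.2) ∨ (0 ≤ t.2.1 ∧ t.2.1 ≤ t.1 ∧ t.1 = t.2.2))}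

/-- The class number `h(Δ)`, i.e. the cardinality of `T_Δ`. -/
noncomputable def classNumber (Δ : ℤ) : ℕ := (Tset Δ).ncard

/-- The point `τ(a,b,c) = (b + √Δ)/(2a)` (here `√Δ = i·√|Δ|` since `Δ < 0`). -/
noncomputable def tauOf (Δ a b : ℤ) : ℂ :=
  ((b : ℂ) + Complex.I * (Real.sqrt (-(Δ : ℝ)) : ℝ)) / (2 * (a : ℂ))

/-- The standard fundamental domain `𝔇`: the open hyperbolic triangle with vertices
`ζ₃`, `ζ₆`, `∞`, together with the geodesics joining `ζ₆` to `i` and to `∞`. -/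
def fundDomain : Set ℂ :=
  {z | 0 < z.im ∧
    ((1 < ‖z‖ ∧ -(1 / 2) < z.re ∧ z.re < 1 / 2) ∨
     (‖z‖ = 1 ∧ 0 ≤ z.re ∧ z.re ≤ 1 / 2) ∨
     (z.re = 1 / 2 ∧ 1 ≤ ‖z‖))}

/-- The right half `𝔇⁺ = {z ∈ 𝔇 : Re z ≥ 0}` of the fundamental domain. -/
def fundDomainPlus : Set ℂ := {z ∈ fundDomain | 0 ≤ z.re}

/-- `ζ₆ = (1 + √-3)/2`. -/
noncomputable def zeta6 : ℂ := (1 + Complex.I * (Real.sqrt 3 : ℝ)) / 2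

lemma tauOf_eq_div_ofReal (Δ a b : ℤ) :
    tauOf Δ a b = ((b : ℂ) + Complex.I * (√(-(Δ : ℝ)) : ℝ)) / ((2 * a : ℝ) : ℂ) := by
  rw [tauOf]
  push_cast
  rfl

lemma tauOf_re (Δ a b : ℤ) : (tauOf Δ a b).re = b / (2 * a) := by
  rw [tauOf_eq_div_ofReal, Complex.div_ofReal_re]
  simp

lemma tauOf_im (Δ a b : ℤ) : (tauOf Δ a b).im = √(-(Δ : ℝ)) / (2 * a) := by
  rw [tauOf_eq_div_ofReal, Complex.div_ofReal_im]
  simp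

lemma tauOf_im_pos {Δ a : ℤ} (b : ℤ) (hΔ : Δ < 0) (ha : 0 < a) : 0 < (tauOf Δ a b).im := by
  rw [tauOf_im]
  have : (0 : ℝ) < -Δ := by exact_mod_cast neg_pos.mpr hΔ
  positivity

lemma two_mul_mul_re_tauOf (Δ : ℤ) {a : ℤ} (b : ℤ) (ha : a ≠ 0) :
    2 * a * (tauOf Δ a b).re = b := by
  rw [tauOf_re]
  field_simp

lemma mul_norm_sq_tauOf {Δ a b c : ℤ} (hΔ : Δ < 0) (hdisc : b ^ 2 - 4 * a * c = Δ) (ha : a ≠ 0) :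
    a * ‖tauOf Δ a b‖ ^ 2 = c := by
  have hΔ' : (0 : ℝ) ≤ -Δ := by exact_mod_cast (neg_pos.mpr hΔ).le
  rw [Complex.sq_norm, Complex.normSq_apply, tauOf_re, tauOf_im]
  field_simp
  rw [Real.sq_sqrt hΔ', ← hdisc]
  push_cast
  ring

lemma fst_pos_of_mem_Tset {Δ a b c : ℤ} (hΔ : Δ < 0) (h : (a, b, c) ∈ Tset Δ) : 0 < a := by
  obtain ⟨-, hdisc, ⟨hb₁, hb₂, -⟩ | ⟨hb₀, hb₁, hac⟩⟩ := h
  · linarith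
  · dsimp only at hdisc hb₀ hb₁ hac
    subst hac
    nlinarith

lemma mem_fundDomain_of_reduced {z : ℂ} {a b c : ℝ} (ha : 0 < a) (him : 0 < z.im)
    (hre : 2 * a * z.re = b) (hnorm : a * ‖z‖ ^ 2 = c)
    (hred : (-a < b ∧ b ≤ a ∧ a < c) ∨ (0 ≤ b ∧ b ≤ a ∧ a = c)) : z ∈ fundDomain := by
  refine ⟨him, ?_⟩
  rcases hred with ⟨hb₁, hb₂, hac⟩ | ⟨hb₀, hb₁, rfl⟩
  · have hz : 1 < ‖z‖ := (one_lt_sq_iff₀ (norm_nonneg z)).mp (by nlinarith)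
    rcases hb₂.lt_or_eq with hb₂ | rfl
    · exact Or.inl ⟨hz, by nlinarith, by nlinarith⟩
    · exact Or.inr (Or.inr ⟨by nlinarith, hz.le⟩)
  · have hz : ‖z‖ = 1 := (pow_eq_one_iff_of_nonneg (norm_nonneg z) two_ne_zero).mp (by nlinarith)
    exact Or.inr (Or.inl ⟨hz, by nlinarith, by nlinarith⟩)

theorem tauOf_mem_fundDomain_general (Δ : ℤ) (hΔ : Δ < 0)
    (a b c : ℤ) (h : (a, b, c) ∈ Tset Δ) :
    tauOf Δ a b ∈ fundDomain := by
  have ha : 0 < a := fst_pos_of_mem_Tset hΔ h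
  obtain ⟨-, hdisc, hred⟩ := h
  exact mem_fundDomain_of_reduced (a := a) (b := b) (c := c) (by exact_mod_cast ha)
    (tauOf_im_pos b hΔ ha) (by exact_mod_cast two_mul_mul_re_tauOf Δ b ha.ne')
    (by exact_mod_cast mul_norm_sq_tauOf hΔ hdisc ha.ne') (by exact_mod_cast hred)

theorem tauOf_mem_fundDomain (Δ : ℤ) (hΔ : Δ < 0) (hd : Δ % 4 = 0 ∨ Δ % 4 = 1)
    (a b c : ℤ) (h : (a, b, c) ∈ Tset Δ) :
    tauOf Δ a b ∈ fundDomain :=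
  tauOf_mem_fundDomain_general Δ hΔ a b c h
end

section
/- Let Δ < 0 be a discriminant with Δ ∉ {−3, −4}. If the class numbers satisfy h(4Δ) = h(Δ), then Δ ≡ 1 (mod 8). -/
open Complex Polynomial

/-!
Suppose `Δ ≢ 1 (mod 8)`. Sending the form `a x² + b x y + c y²` to its restriction to a suitable
sublattice of index 2 — `(2x, y)` if `a` is even (then `c` is odd, as `b` odd and `a, c` even would
force `Δ ≡ 1 (mod 8)`), `(x, 2y)` if `a` is odd — and reducing the result by swapping `x, y` if
needed and a single translation gives an injection `T_Δ → T_{4Δ}`. The leading coefficient of an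
image is odd or divisible by `8`, so a reduced form `4 x² + B x y + C y²` of discriminant `4Δ`,
which exists once `Δ ≤ -16`, is missed and `h(Δ) < h(4Δ)`. The remaining discriminants
`-8, -11, -12` are checked by enumeration.
-/

namespace BinaryQuadForm

-- A triple `(a, b, c)` stands for the form `a x² + b x y + c y²`.

def IsPrimitive (t : ℤ × ℤ × ℤ) : Prop := Int.gcd t.1 (Int.gcd t.2.1 t.2.2) = 1

def disc (t : ℤ × ℤ × ℤ) : ℤ := t.2.1 ^ 2 - 4 * t.1 * t.2.2

def IsReduced (t : ℤ × ℤ × ℤ) : Prop :=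
  (-t.1 < t.2.1 ∧ t.2.1 ≤ t.1 ∧ t.1 < t.2.2) ∨ (0 ≤ t.2.1 ∧ t.2.1 ≤ t.1 ∧ t.1 = t.2.2)

theorem mem_Tset_iff {Δ : ℤ} {t : ℤ × ℤ × ℤ} :
    t ∈ Tset Δ ↔ IsPrimitive t ∧ disc t = Δ ∧ IsReduced t :=
  Iff.rfl

theorem isPrimitive_iff {t : ℤ × ℤ × ℤ} :
    IsPrimitive t ↔ ∀ d : ℤ, d ∣ t.1 → d ∣ t.2.1 → d ∣ t.2.2 → IsUnit d := by
  refine ⟨fun h d h₁ h₂ h₃ => isUnit_of_dvd_one ?_, fun h => ?_⟩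
  · have := Int.dvd_coe_gcd h₁ (Int.dvd_coe_gcd h₂ h₃)
    rwa [show Int.gcd t.1 (Int.gcd t.2.1 t.2.2) = 1 from h, Nat.cast_one] at this
  · have hbc := Int.gcd_dvd_right t.1 (Int.gcd t.2.1 t.2.2)
    have hunit := h _ (Int.gcd_dvd_left _ _) (hbc.trans (Int.gcd_dvd_left _ _))
      (hbc.trans (Int.gcd_dvd_right _ _))
    exact Nat.isUnit_iff.mp (Int.ofNat_isUnit.mp hunit)

/-- The substitution `(x, y) ↦ (2x, y)`. -/
def scale (t : ℤ × ℤ × ℤ) : ℤ × ℤ × ℤ := (4 * t.1, 2 * t.2.1, t.2.2)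

/-- The substitution `(x, y) ↦ (y, x)`. -/
def swap (t : ℤ × ℤ × ℤ) : ℤ × ℤ × ℤ := (t.2.2, t.2.1, t.1)

/-- The substitution `(x, y) ↦ (x + k y, y)`. -/
def shift (k : ℤ) (t : ℤ × ℤ × ℤ) : ℤ × ℤ × ℤ :=
  (t.1, t.2.1 + 2 * k * t.1, t.2.2 + k * t.2.1 + k ^ 2 * t.1)

def shiftReduce (t : ℤ × ℤ × ℤ) : ℤ × ℤ × ℤ :=
  if t.2.1 ≤ -t.1 then shift 1 t else if t.1 < t.2.1 then shift (-1) t else t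

theorem disc_scale (t : ℤ × ℤ × ℤ) : disc (scale t) = 4 * disc t := by
  simp only [disc, scale]; ring

theorem disc_swap (t : ℤ × ℤ × ℤ) : disc (swap t) = disc t := by
  simp only [disc, swap]; ring

theorem disc_shift (k : ℤ) (t : ℤ × ℤ × ℤ) : disc (shift k t) = disc t := by
  simp only [disc, shift]; ring

theorem disc_shiftReduce (t : ℤ × ℤ × ℤ) : disc (shiftReduce t) = disc t := by
  unfold shiftReduce; split_ifs <;> simp only [disc_shift]

theorem fst_shiftReduce (t : ℤ × ℤ × ℤ) : (shiftReduce t).1 = t.1 := by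
  unfold shiftReduce; split_ifs <;> rfl

theorem IsPrimitive.swap {t : ℤ × ℤ × ℤ} (h : IsPrimitive t) : IsPrimitive (swap t) :=
  isPrimitive_iff.mpr fun d h₁ h₂ h₃ => isPrimitive_iff.mp h d h₃ h₂ h₁

theorem IsPrimitive.scale {t : ℤ × ℤ × ℤ} (h : IsPrimitive t) (hc : Odd t.2.2) :
    IsPrimitive (scale t) := by
  refine isPrimitive_iff.mpr fun d h₁ h₂ h₃ => ?_
  have hd : IsCoprime d 2 := (Int.isCoprime_two_right.mpr hc).of_isCoprime_of_dvd_left h₃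
  have h₁' : d ∣ 2 * (2 * t.1) := by rwa [← mul_assoc]
  exact isPrimitive_iff.mp h d (hd.dvd_of_dvd_mul_left (hd.dvd_of_dvd_mul_left h₁'))
    (hd.dvd_of_dvd_mul_left h₂) h₃

theorem IsPrimitive.shift {t : ℤ × ℤ × ℤ} (h : IsPrimitive t) (k : ℤ) :
    IsPrimitive (shift k t) := by
  rw [isPrimitive_iff] at h ⊢
  intro d h₁ h₂ h₃
  simp only [BinaryQuadForm.shift] at h₁ h₂ h₃
  have hb : d ∣ t.2.1 := (dvd_add_left (dvd_mul_of_dvd_right h₁ _)).mp h₂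
  rw [add_assoc] at h₃
  exact h d h₁ hb
    ((dvd_add_left ((dvd_mul_of_dvd_right hb k).add (dvd_mul_of_dvd_right h₁ _))).mp h₃)

theorem IsPrimitive.shiftReduce {t : ℤ × ℤ × ℤ} (h : IsPrimitive t) :
    IsPrimitive (shiftReduce t) := by
  unfold BinaryQuadForm.shiftReduce; split_ifs
  exacts [h.shift 1, h.shift (-1), h]

theorem isReduced_shiftReduce {A B C : ℤ} (hA : 0 < A) (hAC : A < C)
    (hBA : -(2 * A) ≤ B ∧ B ≤ 2 * A) (hBC : -C < B ∧ B < C) :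
    IsReduced (shiftReduce (A, B, C)) := by
  unfold shiftReduce shift IsReduced
  split_ifs <;> dsimp only at * <;> omega

def sublatticeForm (t : ℤ × ℤ × ℤ) : ℤ × ℤ × ℤ :=
  if Even t.1 then (if 4 * t.1 < t.2.2 then scale t else swap (scale t))
  else swap (scale (swap t))

def reducedSublatticeForm (t : ℤ × ℤ × ℤ) : ℤ × ℤ × ℤ :=
  shiftReduce (sublatticeForm t)

end BinaryQuadForm

open BinaryQuadForm

section ReducedTriples

variable {Δ a b c : ℤ}

theorem bounds_of_mem_Tset (hΔ : Δ < 0) (h : (a, b, c) ∈ Tset Δ) :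
    0 < a ∧ -a < b ∧ b ≤ a ∧ a ≤ c := by
  obtain ⟨-, hdisc, hred⟩ := h
  dsimp only at hdisc hred
  rcases hred with hred | ⟨hb, hba, rfl⟩
  · omega
  · have ha : a ≠ 0 := by
      rintro rfl
      obtain rfl : b = 0 := by omega
      omega
    omega

theorem three_mul_sq_le_of_mem_Tset (hΔ : Δ < 0) (h : (a, b, c) ∈ Tset Δ) :
    3 * a ^ 2 ≤ -Δ := by
  obtain ⟨ha, hba, hab, hac⟩ := bounds_of_mem_Tset hΔ h
  have hdisc : b ^ 2 - 4 * a * c = Δ := h.2.1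
  nlinarith

theorem odd_of_mem_Tset_of_even (h8 : Δ % 8 ≠ 1) (h : (a, b, c) ∈ Tset Δ) (ha : Even a) :
    Odd c := by
  obtain ⟨hprim, hdisc, -⟩ := h
  dsimp only at hdisc
  by_contra hc
  rw [Int.not_odd_iff_even] at hc
  have hb : Odd b := by
    by_contra hb
    rw [Int.not_odd_iff_even] at hb
    have h2 : ¬IsUnit (2 : ℤ) := by norm_num [Int.isUnit_iff]
    exact h2 (isPrimitive_iff.mp hprim 2 (even_iff_two_dvd.mp ha) (even_iff_two_dvd.mp hb)
      (even_iff_two_dvd.mp hc))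
  obtain ⟨m, rfl⟩ := hb
  obtain ⟨a', rfl⟩ := ha
  obtain ⟨c', rfl⟩ := hc
  obtain ⟨r, hr⟩ := Int.even_mul_succ_self m
  have : Δ = 8 * (r - 2 * a' * c') + 1 := by linear_combination -hdisc + 4 * hr
  omega

def completeTriple (Δ : ℤ) : ℤ × ℤ ↪ ℤ × ℤ × ℤ where
  toFun p := (p.1, p.2, (p.2 ^ 2 - Δ) / (4 * p.1))
  inj' _ _ h := by
    simp only [Prod.mk.injEq] at h
    exact Prod.ext h.1 h.2.1

noncomputable def candidates (Δ : ℤ) : Finset (ℤ × ℤ × ℤ) :=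
  (Finset.Icc 1 (-Δ / 3) ×ˢ Finset.Icc (-(-Δ / 3)) (-Δ / 3)).map (completeTriple Δ)

theorem Tset_subset_candidates (hΔ : Δ < 0) : Tset Δ ⊆ candidates Δ := by
  rintro ⟨a, b, c⟩ h
  obtain ⟨ha, hba, hab, -⟩ := bounds_of_mem_Tset hΔ h
  have h3a := three_mul_sq_le_of_mem_Tset hΔ h
  have hdisc : b ^ 2 - 4 * a * c = Δ := h.2.1
  have haΔ : a ≤ -Δ / 3 := by
    rw [Int.le_ediv_iff_mul_le (by norm_num)]
    nlinarith
  refine Finset.mem_map.mpr ⟨(a, b), Finset.mem_product.mpr ⟨?_, ?_⟩, ?_⟩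
  · exact Finset.mem_Icc.mpr ⟨ha, haΔ⟩
  · exact Finset.mem_Icc.mpr ⟨by omega, by omega⟩
  · have hc : (b ^ 2 - Δ) / (4 * a) = c := by
      rw [← hdisc, sub_sub_cancel]
      exact Int.mul_ediv_cancel_left _ (by omega)
    exact congrArg (fun c' => (a, b, c')) hc

theorem Tset_finite (hΔ : Δ < 0) : (Tset Δ).Finite :=
  (candidates Δ).finite_toSet.subset (Tset_subset_candidates hΔ)

instance decidableMemTset (Δ : ℤ) : DecidablePred (· ∈ Tset Δ) :=
  fun _ => inferInstanceAs (Decidable (_ ∧ _ ∧ _))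

theorem classNumber_eq_card_filter_candidates (hΔ : Δ < 0) :
    classNumber Δ = ((candidates Δ).filter (· ∈ Tset Δ)).card := by
  rw [classNumber, ← Set.ncard_coe_finset, Finset.coe_filter]
  congr 1
  ext t
  exact ⟨fun h => ⟨Tset_subset_candidates hΔ h, h⟩, And.right⟩

theorem reducedSublatticeForm_mem_Tset (hΔ : Δ < 0) (h8 : Δ % 8 ≠ 1) {t : ℤ × ℤ × ℤ}
    (ht : t ∈ Tset Δ) : reducedSublatticeForm t ∈ Tset (4 * Δ) := by
  obtain ⟨a, b, c⟩ := t
  obtain ⟨ha, hba, hab, hac⟩ := bounds_of_mem_Tset hΔ ht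
  have hodd := odd_of_mem_Tset_of_even h8 ht
  obtain ⟨hprim, hdisc, -⟩ := mem_Tset_iff.mp ht
  rw [reducedSublatticeForm, mem_Tset_iff, disc_shiftReduce]
  refine ⟨IsPrimitive.shiftReduce ?_, ?_, ?_⟩
  · unfold sublatticeForm
    split_ifs with he
    · exact hprim.scale (hodd he)
    · exact (hprim.scale (hodd he)).swap
    · exact (hprim.swap.scale (Int.not_even_iff_odd.mp he)).swap
  · unfold sublatticeForm
    split_ifs <;> simp only [disc_scale, disc_swap, hdisc]
  · simp only [sublatticeForm, scale, swap]
    split_ifs with he hlt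
    · exact isReduced_shiftReduce (by omega) hlt ⟨by omega, by omega⟩ ⟨by omega, by omega⟩
    · have hc := Int.odd_iff.mp (hodd he)
      exact isReduced_shiftReduce (by omega) (by omega) ⟨by omega, by omega⟩
        ⟨by omega, by omega⟩
    · exact isReduced_shiftReduce ha (by omega) ⟨by omega, by omega⟩ ⟨by omega, by omega⟩

theorem reducedSublatticeForm_injOn (hΔ : Δ < 0) (h8 : Δ % 8 ≠ 1) :
    Set.InjOn reducedSublatticeForm (Tset Δ) := by
  rintro ⟨a₁, b₁, c₁⟩ h₁ ⟨a₂, b₂, c₂⟩ h₂ he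
  have := bounds_of_mem_Tset hΔ h₁
  have := bounds_of_mem_Tset hΔ h₂
  have hodd₁ := fun h => Int.odd_iff.mp (odd_of_mem_Tset_of_even h8 h₁ (Int.even_iff.mpr h))
  have hodd₂ := fun h => Int.odd_iff.mp (odd_of_mem_Tset_of_even h8 h₂ (Int.even_iff.mpr h))
  simp only [reducedSublatticeForm, shiftReduce, sublatticeForm, scale, swap, shift,
    Int.even_iff] at he
  split_ifs at he <;> simp only [Prod.mk.injEq] at he ⊢ <;> omega

theorem fst_reducedSublatticeForm_ne_four (h8 : Δ % 8 ≠ 1) {t : ℤ × ℤ × ℤ} (ht : t ∈ Tset Δ) :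
    (reducedSublatticeForm t).1 ≠ 4 := by
  obtain ⟨a, b, c⟩ := t
  have hodd := odd_of_mem_Tset_of_even h8 ht
  rw [reducedSublatticeForm, fst_shiftReduce, sublatticeForm]
  split_ifs with he
  · simp only [scale]; have := Int.even_iff.mp he; omega
  · simp only [scale, swap]; have := Int.odd_iff.mp (hodd he); omega
  · simp only [scale, swap]; have := Int.not_even_iff.mp he; omega

theorem classNumber_lt_classNumber_four_mul (hΔ : Δ < 0) (h8 : Δ % 8 ≠ 1) {t₀ : ℤ × ℤ × ℤ}
    (ht₀ : t₀ ∈ Tset (4 * Δ)) (h4 : t₀.1 = 4) : classNumber Δ < classNumber (4 * Δ) := by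
  have himage : reducedSublatticeForm '' Tset Δ ⊂ Tset (4 * Δ) := by
    refine (Set.ssubset_iff_of_subset ?_).mpr ⟨t₀, ht₀, ?_⟩
    · rintro _ ⟨t, ht, rfl⟩
      exact reducedSublatticeForm_mem_Tset hΔ h8 ht
    · rintro ⟨t, ht, rfl⟩
      exact fst_reducedSublatticeForm_ne_four h8 ht h4
  calc classNumber Δ = (reducedSublatticeForm '' Tset Δ).ncard :=
        (reducedSublatticeForm_injOn hΔ h8).ncard_image.symm
    _ < classNumber (4 * Δ) := Set.ncard_lt_ncard himage (Tset_finite (by omega))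

theorem exists_mem_Tset_four_mul_fst_eq_four (hΔ : Δ ≤ -16) (hd : Δ % 4 = 0 ∨ Δ % 4 = 1)
    (h8 : Δ % 8 ≠ 1) : ∃ t ∈ Tset (4 * Δ), t.1 = 4 := by
  obtain ⟨b, C, hb, hdisc, hC⟩ :
      ∃ b C : ℤ, (0 ≤ b ∧ b ≤ 2) ∧ b ^ 2 - 4 * C = Δ ∧ C % 2 = 1 := by
    rcases (by omega : Δ % 8 = 0 ∨ Δ % 8 = 4 ∨ Δ % 8 = 5) with h | h | h
    · exact ⟨2, 1 - Δ / 4, by norm_num, by omega, by omega⟩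
    · exact ⟨0, -(Δ / 4), by norm_num, by omega, by omega⟩
    · exact ⟨1, (1 - Δ) / 4, by norm_num, by omega, by omega⟩
  have hprim : IsPrimitive (1, b, C) := isPrimitive_iff.mpr fun d hd _ _ => isUnit_of_dvd_one hd
  refine ⟨scale (1, b, C), ⟨hprim.scale (Int.odd_iff.mpr hC), ?_, Or.inl ?_⟩, rfl⟩
  · show disc (scale (1, b, C)) = 4 * Δ
    rw [disc_scale, disc, ← hdisc]; ring
  · have : 0 ≤ b ^ 2 := sq_nonneg b
    simp only [scale]; omega

set_option maxRecDepth 10000 in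
theorem classNumber_four_mul_ne_of_small (hΔ : Δ = -8 ∨ Δ = -11 ∨ Δ = -12) :
    classNumber (4 * Δ) ≠ classNumber Δ := by
  rw [classNumber_eq_card_filter_candidates (by omega),
    classNumber_eq_card_filter_candidates (by omega)]
  rcases hΔ with rfl | rfl | rfl <;> decide

end ReducedTriples

theorem disc_one_mod_eight_of_classNumber_eq (Δ : ℤ) (hΔ : Δ < 0)
    (hd : Δ % 4 = 0 ∨ Δ % 4 = 1) (h3 : Δ ≠ -3) (h4 : Δ ≠ -4)
    (h : classNumber (4 * Δ) = classNumber Δ) :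
    Δ % 8 = 1 := by
  by_contra h8
  rcases le_or_gt Δ (-16) with hlarge | hsmall
  · obtain ⟨t₀, ht₀, hfst⟩ := exists_mem_Tset_four_mul_fst_eq_four hlarge hd h8
    exact (classNumber_lt_classNumber_four_mul hΔ h8 ht₀ hfst).ne' h
  · exact classNumber_four_mul_ne_of_small (by omega) h
end
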